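/- Let n be a positive integer divisible by 4 and let L = n·I − J − (e₁ − e₂)(e₁ − e₂)ᵀ be the Laplacian of the complete graph on n vertices with the edge between vertices 1 and 2 deleted. Then for every real h, the fidelity at time π/2 + h satisfies p(π/2 + h) = |(exp(i(π/2 + h)L))₁₂|² = |1/n + (1/2)e^{ih(n−2)} + ((n−2)/(2n))e^{ihn}|² = 1 − ((n−2)/(2n))·(1 − cos(2h)) − (1/n)·(1 − cos((n−2)h)) − ((n−2)/n²)·(1 − cos(nh)). -/

import Mathlib

open Matrix

/-- The vector `e₁ - e₂`. -/
def eVec (n : ℕ) : Fin n → ℝ :=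
  fun i => (if (i : ℕ) = 0 then 1 else 0) - (if (i : ℕ) = 1 then 1 else 0)

/-- The Laplacian `L = n I - J - (e₁ - e₂)(e₁ - e₂)ᵀ` of the complete graph on `n`
vertices with the edge between vertices 1 and 2 deleted. -/
def lap (n : ℕ) : Matrix (Fin n) (Fin n) ℝ :=
  (n : ℝ) • (1 : Matrix (Fin n) (Fin n) ℝ) - Matrix.of (fun _ _ => (1 : ℝ))
    - Matrix.vecMulVec (eVec n) (eVec n)

/-!
`P = J / n` and `Q = (e₁ - e₂)(e₁ - e₂)ᵀ / 2` are rank-one projections with `P Q = Q P = 0`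
(because `e₁ - e₂ ⊥ 𝟙`), and `L = (n - 2) Q + n (1 - P - Q)` is a decomposition into mutually
annihilating idempotents. Hence `exp (i t L) = P + e^{it(n-2)} Q + e^{itn} (1 - P - Q)`, whose
`(1, 2)` entry is `1/n - ½ e^{it(n-2)} + ((n-2)/(2n)) e^{itn}`. At `t = π/2 + h` with `4 ∣ n` the
extra phases are `i^n = 1` and `i^(n-2) = -1`. Expanding `|a + b e^{iθ} + c e^{iψ}|²` with
`a + b + c = 1` gives the cosine form.
-/

section ExpIdempotent

open NormedSpace
open scoped Nat

variable {𝕂 𝔸 : Type*} [RCLike 𝕂] [Ring 𝔸] [Algebra 𝕂 𝔸] [TopologicalSpace 𝔸]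
  [IsTopologicalRing 𝔸] [ContinuousSMul 𝕂 𝔸] [T2Space 𝔸]

theorem exp_smul_add_smul_of_mul_eq_zero {P Q : 𝔸} (hP : IsIdempotentElem P)
    (hQ : IsIdempotentElem Q) (hPQ : P * Q = 0) (hQP : Q * P = 0) (a b : 𝕂) :
    exp (a • P + b • Q) = 1 + (exp a - 1) • P + (exp b - 1) • Q := by
  have hpow (k : ℕ) : (a • P + b • Q) ^ (k + 1) = a ^ (k + 1) • P + b ^ (k + 1) • Q := by
    induction k with
    | zero => simp
    | succ k ih =>
      rw [pow_succ, ih]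
      simp only [add_mul, mul_add, smul_mul_smul, hP.eq, hQ.eq, hPQ, hQP, smul_zero,
        add_zero, zero_add, ← pow_succ]
  have hasSum_exp_sub_one (x : 𝕂) :
      HasSum (fun k : ℕ => ((k + 1)! ⁻¹ : 𝕂) * x ^ (k + 1)) (exp x - 1) := by
    have := (hasSum_nat_add_iff' 1).mpr (exp_series_hasSum_exp' (𝕂 := 𝕂) (𝔸 := 𝕂) x)
    simpa only [Finset.range_one, Finset.sum_singleton, pow_zero, Nat.factorial_zero,
      Nat.cast_one, inv_one, one_smul, smul_eq_mul, mul_one] using this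
  have hsum : HasSum (fun k : ℕ => ((k + 1)! ⁻¹ : 𝕂) • (a • P + b • Q) ^ (k + 1))
      ((exp a - 1) • P + (exp b - 1) • Q) := by
    simp only [hpow, smul_add, smul_smul]
    exact ((hasSum_exp_sub_one a).smul_const P).add ((hasSum_exp_sub_one b).smul_const Q)
  rw [exp_eq_tsum 𝕂]
  beta_reduce
  rw [((hasSum_nat_add_iff (f := fun k : ℕ => (k ! ⁻¹ : 𝕂) • (a • P + b • Q) ^ k) 1).mp
    hsum).tsum_eq]
  simp only [Finset.range_one, Finset.sum_singleton, pow_zero, Nat.factorial_zero,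
    Nat.cast_one, inv_one, one_smul]
  abel

end ExpIdempotent

section RankOne

variable {K m : Type*} [Field K] [Fintype m]

noncomputable def rankOneProj (u : m → K) : Matrix m m K := (u ⬝ᵥ u)⁻¹ • vecMulVec u u

theorem rankOneProj_apply (u : m → K) (i j : m) :
    rankOneProj u i j = u i * u j / (u ⬝ᵥ u) := by
  simp [rankOneProj, vecMulVec_apply, div_eq_inv_mul]

theorem isIdempotentElem_rankOneProj {u : m → K} (hu : u ⬝ᵥ u ≠ 0) :
    IsIdempotentElem (rankOneProj u) := by
  rw [IsIdempotentElem, rankOneProj, smul_mul_smul, vecMulVec_mul_vecMulVec, vecMulVec_smul,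
    smul_smul, mul_assoc, inv_mul_cancel₀ hu, mul_one]

theorem rankOneProj_mul_rankOneProj {u w : m → K} (h : u ⬝ᵥ w = 0) :
    rankOneProj u * rankOneProj w = 0 := by
  rw [rankOneProj, rankOneProj, smul_mul_smul, vecMulVec_mul_vecMulVec, h, zero_smul,
    vecMulVec_zero, smul_zero]

end RankOne

noncomputable def constProj (n : ℕ) : Matrix (Fin n) (Fin n) ℂ := rankOneProj 1

noncomputable def edgeProj (n : ℕ) : Matrix (Fin n) (Fin n) ℂ := rankOneProj fun i => (eVec n i : ℂ)

section Laplacian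

variable {n : ℕ}

theorem ofReal_eVec (hn : 2 ≤ n) :
    (fun i => (eVec n i : ℂ)) = Pi.single ⟨0, by omega⟩ 1 - Pi.single ⟨1, by omega⟩ 1 := by
  ext i
  simp only [eVec, Pi.sub_apply, Pi.single_apply, Fin.ext_iff]
  split_ifs <;> simp

theorem one_dotProduct_ofReal_eVec (hn : 2 ≤ n) : 1 ⬝ᵥ (fun i => (eVec n i : ℂ)) = 0 := by
  simp [ofReal_eVec hn, dotProduct_sub]

theorem ofReal_eVec_dotProduct_self (hn : 2 ≤ n) :
    (fun i => (eVec n i : ℂ)) ⬝ᵥ (fun i => (eVec n i : ℂ)) = 2 := by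
  norm_num [ofReal_eVec hn, dotProduct_sub, Fin.ext_iff]

theorem constProj_apply (i j : Fin n) : constProj n i j = (n : ℂ)⁻¹ := by
  simp [constProj, rankOneProj_apply]

theorem edgeProj_apply_zero_one (hn : 2 ≤ n) :
    edgeProj n ⟨0, by omega⟩ ⟨1, by omega⟩ = -2⁻¹ := by
  rw [edgeProj, rankOneProj_apply, ofReal_eVec_dotProduct_self hn]
  norm_num [eVec]

theorem lap_map_ofReal (hn : 2 ≤ n) :
    (lap n).map (fun x => (x : ℂ))
      = ((n : ℂ) - 2) • edgeProj n + (n : ℂ) • (1 - constProj n - edgeProj n) := by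
  have hn0 : (n : ℂ) ≠ 0 := by exact_mod_cast (show n ≠ 0 by omega)
  ext i j
  simp only [lap, map_apply, Matrix.sub_apply, Matrix.add_apply, Matrix.smul_apply, one_apply,
    of_apply, vecMulVec_apply, constProj_apply, edgeProj, rankOneProj_apply,
    ofReal_eVec_dotProduct_self hn, smul_eq_mul]
  split_ifs <;> push_cast <;> field_simp <;> ring

theorem exp_smul_lap_map_ofReal (hn : 2 ≤ n) (s : ℂ) :
    NormedSpace.exp (s • (lap n).map (fun x => (x : ℂ)))
      = 1 + (Complex.exp (s * ((n : ℂ) - 2)) - 1) • edgeProj n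
          + (Complex.exp (s * n) - 1) • (1 - constProj n - edgeProj n) := by
  have hP : IsIdempotentElem (constProj n) :=
    isIdempotentElem_rankOneProj (by simpa using (show n ≠ 0 by omega))
  have hQ : IsIdempotentElem (edgeProj n) :=
    isIdempotentElem_rankOneProj (by simp [ofReal_eVec_dotProduct_self hn])
  have hPQ : constProj n * edgeProj n = 0 :=
    rankOneProj_mul_rankOneProj (one_dotProduct_ofReal_eVec hn)
  have hQP : edgeProj n * constProj n = 0 :=
    rankOneProj_mul_rankOneProj (by rw [dotProduct_comm, one_dotProduct_ofReal_eVec hn])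
  have hR : IsIdempotentElem (1 - constProj n - edgeProj n) := by
    rw [sub_sub]
    exact (hP.add hQ (by rw [hPQ, hQP, add_zero])).one_sub
  rw [lap_map_ofReal hn, smul_add, smul_smul, smul_smul, Complex.exp_eq_exp_ℂ]
  exact exp_smul_add_smul_of_mul_eq_zero hQ hR (by simp [mul_sub, hQP, hQ.eq])
    (by simp [sub_mul, hPQ, hQ.eq]) _ _

theorem exp_smul_lap_map_ofReal_apply_zero_one (hn : 2 ≤ n) (s : ℂ) :
    NormedSpace.exp (s • (lap n).map (fun x => (x : ℂ))) ⟨0, by omega⟩ ⟨1, by omega⟩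
      = (n : ℂ)⁻¹ - (2 : ℂ)⁻¹ * Complex.exp (s * ((n : ℂ) - 2))
          + (((n : ℂ) - 2) / (2 * (n : ℂ))) * Complex.exp (s * n) := by
  have hn0 : (n : ℂ) ≠ 0 := by exact_mod_cast (show n ≠ 0 by omega)
  rw [exp_smul_lap_map_ofReal hn]
  simp only [Matrix.add_apply, Matrix.sub_apply, Matrix.smul_apply, one_apply, Fin.mk.injEq,
    zero_ne_one, if_false, constProj_apply, edgeProj_apply_zero_one hn, smul_eq_mul]
  field_simp
  ring

end Laplacian

open Complex in
theorem norm_sq_add_mul_exp_add_mul_exp (a b c θ ψ : ℝ) :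
    ‖(a : ℂ) + b * exp (θ * I) + c * exp (ψ * I)‖ ^ 2
      = (a + b + c) ^ 2 - 2 * a * b * (1 - Real.cos θ) - 2 * a * c * (1 - Real.cos ψ)
          - 2 * b * c * (1 - Real.cos (ψ - θ)) := by
  have hz : (a : ℂ) + b * exp (θ * I) + c * exp (ψ * I)
      = ↑(a + b * Real.cos θ + c * Real.cos ψ) + ↑(b * Real.sin θ + c * Real.sin ψ) * I := by
    rw [exp_mul_I, exp_mul_I, ← ofReal_cos, ← ofReal_sin, ← ofReal_cos, ← ofReal_sin]
    push_cast
    ring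
  rw [hz, Complex.sq_norm, normSq_add_mul_I, Real.cos_sub]
  linear_combination b ^ 2 * Real.sin_sq_add_cos_sq θ + c ^ 2 * Real.sin_sq_add_cos_sq ψ

open Complex in
theorem exp_I_mul_pi_div_two_add_mul (h : ℝ) (k : ℕ) :
    exp (I * ↑(Real.pi / 2 + h) * k) = I ^ k * exp (I * h * k) := by
  nth_rw 2 [← exp_pi_div_two_mul_I]
  rw [← exp_nat_mul, ← exp_add]
  congr 1
  push_cast
  ring

/-- Exact fidelity at time `π/2 + h` for the Laplacian of the complete graph minus an
edge, when `4 ∣ n`: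
`p(π/2 + h) = |1/n + ½ e^{ih(n-2)} + ((n-2)/(2n)) e^{ihn}|²`
`           = 1 - ((n-2)/(2n))(1 - cos 2h) - (1/n)(1 - cos((n-2)h)) - ((n-2)/n²)(1 - cos nh)`. -/
theorem stmt14 {n : ℕ} (hn : 0 < n) (hdvd : 4 ∣ n) (h : ℝ) :
    ‖(NormedSpace.exp (Complex.I • ((Real.pi / 2 + h : ℝ) : ℂ) •
            (lap n).map (fun x => (x : ℂ)))) ⟨0, by omega⟩ ⟨1, by omega⟩‖ ^ 2
      = ‖(n : ℂ)⁻¹ + (2 : ℂ)⁻¹ * Complex.exp (Complex.I * (h : ℂ) * ((n : ℂ) - 2))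
            + (((n : ℂ) - 2) / (2 * (n : ℂ))) * Complex.exp (Complex.I * (h : ℂ) * (n : ℂ))‖ ^ 2
    ∧ ‖(n : ℂ)⁻¹ + (2 : ℂ)⁻¹ * Complex.exp (Complex.I * (h : ℂ) * ((n : ℂ) - 2))
            + (((n : ℂ) - 2) / (2 * (n : ℂ))) * Complex.exp (Complex.I * (h : ℂ) * (n : ℂ))‖ ^ 2
      = 1 - ((n : ℝ) - 2) / (2 * n) * (1 - Real.cos (2 * h))
          - (1 / (n : ℝ)) * (1 - Real.cos (((n : ℝ) - 2) * h))
          - ((n : ℝ) - 2) / (n : ℝ) ^ 2 * (1 - Real.cos ((n : ℝ) * h)) := by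
  have hn2 : 2 ≤ n := by omega
  have hI_pow : Complex.I ^ n = 1 := by
    obtain ⟨m, rfl⟩ := hdvd
    rw [pow_mul, Complex.I_pow_four, one_pow]
  have hI_pow_sub_two : Complex.I ^ (n - 2) = -1 := by
    have := pow_sub_mul_pow Complex.I hn2
    rw [hI_pow, Complex.I_sq] at this
    linear_combination -this
  have hexp_n := exp_I_mul_pi_div_two_add_mul h n
  rw [hI_pow, one_mul] at hexp_n
  have hexp_n2 := exp_I_mul_pi_div_two_add_mul h (n - 2)
  rw [hI_pow_sub_two, neg_one_mul, Nat.cast_sub hn2, Nat.cast_ofNat] at hexp_n2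
  refine ⟨?_, ?_⟩
  · rw [smul_smul, exp_smul_lap_map_ofReal_apply_zero_one hn2, hexp_n, hexp_n2]
    congr 2
    ring
  · convert norm_sq_add_mul_exp_add_mul_exp (n : ℝ)⁻¹ 2⁻¹ (((n : ℝ) - 2) / (2 * n))
      (((n : ℝ) - 2) * h) (n * h) using 1
    · push_cast
      ring_nf
    · have hn0 : (n : ℝ) ≠ 0 := by positivity
      rw [show (n : ℝ) * h - (n - 2) * h = 2 * h by ring]
      field_simp
      ring
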